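/- arXiv:2410.18650 — 2 statements merged into one kernel-verified Lean document; each statement's English description precedes it below -/
import Mathlib

section
/- For n ≥ 1, the n × n real matrix C' with entries C'_{ij} = 1/(i+j-1)! (for 1 ≤ i,j ≤ n) has nonzero determinant, and hence full rank. -/
/-!
If `C' v = 0`, the polynomial `f = ∑ⱼ vⱼ X^(n+j) / (n+j)!` has degree `< 2n` and is divisible
by `X^n`; its derivatives of order `m < n` at `1` are the entries `∑ⱼ vⱼ / (n+j-m)!` of `C' v`,
so `(X - 1)^n` divides `f` as well. Hence `f = 0`, and so `v = 0`.
-/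

open Polynomial Nat

namespace Polynomial

variable {K : Type*} [Field K]

theorem eq_zero_of_X_pow_dvd_of_X_sub_C_pow_dvd {f : K[X]} {n : ℕ} {a : K} (ha : a ≠ 0)
    (hX : X ^ n ∣ f) (hXa : (X - C a) ^ n ∣ f) (hdeg : f.degree < 2 * n) : f = 0 := by
  have hcop : IsCoprime (X : K[X]) (X - C a) := by
    simpa using isCoprime_X_sub_C_of_isUnit_sub (a := (0 : K)) (b := a) (by simpa using ha)
  refine eq_zero_of_dvd_of_degree_lt (hcop.pow.mul_dvd hX hXa) (hdeg.trans_eq ?_)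
  rw [degree_mul, degree_pow, degree_pow, degree_X, degree_X_sub_C]
  simp [two_mul]

theorem X_sub_C_pow_dvd_of_isRoot_iterate_derivative [CharZero K] {f : K[X]} {n : ℕ} {a : K}
    (hroot : ∀ m < n, (derivative^[m] f).IsRoot a) : (X - C a) ^ n ∣ f := by
  rcases eq_or_ne f 0 with rfl | hf
  · exact dvd_zero _
  rw [← le_rootMultiplicity_iff hf]
  rcases n with _ | n
  · exact Nat.zero_le _
  exact lt_rootMultiplicity_of_isRoot_iterate_derivative hf fun m hm => hroot m (by omega)

theorem iterate_derivative_C_inv_factorial_mul_X_pow [CharZero K] {m k : ℕ} (hmk : m ≤ k) :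
    derivative^[m] (C ((k ! : K)⁻¹) * X ^ k) = C (((k - m)! : K)⁻¹) * X ^ (k - m) := by
  rw [iterate_derivative_C_mul, iterate_derivative_X_pow_eq_C_mul, ← mul_assoc, ← C_mul,
    ← factorial_mul_descFactorial hmk]
  have := (Nat.descFactorial_pos.2 hmk).ne'
  congr 2
  push_cast
  field_simp

end Polynomial

open Matrix

variable {K : Type*} [Field K]

def invFactorialHankel (K : Type*) [Field K] (n : ℕ) : Matrix (Fin n) (Fin n) K :=
  Matrix.of fun i j => (((i + j + 1 : ℕ) ! : K))⁻¹

noncomputable def invFactorialHankelPoly {n : ℕ} (v : Fin n → K) : K[X] :=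
  X ^ n * ∑ j : Fin n, C (v j / (n + j : ℕ)!) * X ^ (j : ℕ)

theorem invFactorialHankelPoly_eq_sum {n : ℕ} (v : Fin n → K) :
    invFactorialHankelPoly v =
      ∑ j : Fin n, C (v j) * (C (((n + j : ℕ)! : K)⁻¹) * X ^ (n + j)) := by
  simp only [invFactorialHankelPoly, Finset.mul_sum, pow_add, div_eq_mul_inv, C_mul]
  refine Finset.sum_congr rfl fun j _ => ?_
  ring

theorem degree_invFactorialHankelPoly_lt {n : ℕ} (v : Fin n → K) :
    (invFactorialHankelPoly v).degree < 2 * n := by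
  rw [invFactorialHankelPoly, degree_mul, degree_X_pow, two_mul]
  exact WithBot.add_lt_add_left WithBot.coe_ne_bot (degree_sum_fin_lt _)

theorem eq_zero_of_invFactorialHankelPoly_eq_zero [CharZero K] {n : ℕ} {v : Fin n → K}
    (h : invFactorialHankelPoly v = 0) : v = 0 := by
  have hsum : ∑ j : Fin n, C (v j / (n + j : ℕ)!) * X ^ (j : ℕ) = 0 := by
    simpa [invFactorialHankelPoly] using h
  funext j
  have := congrArg (coeff · j) hsum
  simpa [finsetSum_coeff, coeff_C_mul_X_pow, Fin.val_inj, (n + j).factorial_ne_zero] using this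

theorem eval_one_iterate_derivative_invFactorialHankelPoly [CharZero K] {n m : ℕ} (hm : m < n)
    (v : Fin n → K) :
    (derivative^[m] (invFactorialHankelPoly v)).eval 1 =
      (invFactorialHankel K n *ᵥ v) ⟨n - 1 - m, by omega⟩ := by
  rw [invFactorialHankelPoly_eq_sum, iterate_derivative_sum, eval_finsetSum]
  refine Finset.sum_congr rfl fun j _ => ?_
  rw [iterate_derivative_C_mul, iterate_derivative_C_inv_factorial_mul_X_pow (by omega)]
  have hidx : n - 1 - m + j + 1 = n + j - m := by omega
  simp only [eval_mul, eval_C, eval_pow, eval_X, one_pow, mul_one, invFactorialHankel, of_apply,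
    hidx]
  exact mul_comm _ _

theorem det_invFactorialHankel_ne_zero [CharZero K] (n : ℕ) :
    (invFactorialHankel K n).det ≠ 0 := by
  intro hdet
  obtain ⟨v, hv, hMv⟩ := Matrix.exists_mulVec_eq_zero_iff.mpr hdet
  refine hv (eq_zero_of_invFactorialHankelPoly_eq_zero ?_)
  refine eq_zero_of_X_pow_dvd_of_X_sub_C_pow_dvd one_ne_zero (dvd_mul_right _ _) ?_
    (degree_invFactorialHankelPoly_lt v)
  refine X_sub_C_pow_dvd_of_isRoot_iterate_derivative fun m hm => ?_
  rw [IsRoot, eval_one_iterate_derivative_invFactorialHankelPoly hm, hMv, Pi.zero_apply]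

theorem stmt_5_general (n : ℕ) :
    let C' : Matrix (Fin n) (Fin n) ℝ :=
      fun i j => 1 / (Nat.factorial ((i : ℕ) + (j : ℕ) + 1) : ℝ)
    C'.det ≠ 0 ∧ C'.rank = n := by
  intro C'
  have hC' : C' = invFactorialHankel ℝ n := by
    ext i j
    simp [C', invFactorialHankel]
  have hdet : C'.det ≠ 0 := hC' ▸ det_invFactorialHankel_ne_zero n
  refine ⟨hdet, ?_⟩
  rw [Matrix.rank_of_isUnit C' ((Matrix.isUnit_iff_isUnit_det C').mpr hdet.isUnit),
    Fintype.card_fin]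

theorem stmt_5 (n : ℕ) (hn : 1 ≤ n) :
    let C' : Matrix (Fin n) (Fin n) ℝ :=
      fun i j => 1 / (Nat.factorial ((i : ℕ) + (j : ℕ) + 1) : ℝ)
    C'.det ≠ 0 ∧ C'.rank = n :=
  stmt_5_general n
end

section
/- Fix n ≥ 1 and define c(ℓ, m) = 2^{ℓ-1} · m! · (m-1)! / (m-ℓ)! for 1 ≤ ℓ ≤ n and m ≥ n+1. Then the n × n matrix C with entries C_{ij} = c(i, j+n) has full rank. -/
/-!
Since `m! / (m - i)!` is the falling factorial `(m)ᵢ = m (m-1) ⋯ (m-i+1)`, the matrix is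
`diag(2^i) · D · diag((n+j+1)!)` with `D i j = (n+j)ᵢ`. As `(x)ᵢ` is a monic polynomial of
degree `i` in `x`, `det D` equals the Vandermonde determinant of the distinct nodes
`n, n+1, …, 2n-1`, which is nonzero.
-/

open Nat Polynomial

namespace Matrix

variable {R : Type*} [CommRing R] {n : ℕ}

theorem det_descPochhammer_eval_ne_zero [IsDomain R] {v : Fin n → R}
    (hv : Function.Injective v) :
    (of fun i j : Fin n => (descPochhammer R j).eval (v i)).det ≠ 0 := by
  rw [← det_eval_matrixOfPolynomials_eq_det_vandermonde v _
    (fun i => descPochhammer_natDegree R i) (fun i => monic_descPochhammer R i)]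
  exact det_vandermonde_ne_zero_iff.mpr hv

theorem det_descFactorial_ne_zero [IsDomain R] [CharZero R] {v : Fin n → ℕ}
    (hv : Function.Injective v) :
    (of fun i j : Fin n => ((v j).descFactorial i : R)).det ≠ 0 := by
  have hD := det_descPochhammer_eval_ne_zero (R := R) (Nat.cast_injective.comp hv)
  rw [← det_transpose]
  convert hD using 2
  ext i j
  simp [descPochhammer_eval_eq_descFactorial]

theorem det_of_mul_mul {ι : Type*} [Fintype ι] [DecidableEq ι] (a b : ι → R)
    (M : Matrix ι ι R) :
    (of fun i j => a i * (b j * M i j)).det = (∏ i, a i) * ((∏ j, b j) * M.det) :=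
  (det_mul_column a _).trans (congrArg _ (det_mul_row b M))

end Matrix

theorem Nat.cast_factorial_div_factorial_sub {K : Type*} [Field K] [CharZero K] {m i : ℕ}
    (h : i ≤ m) : (m ! : K) / ((m - i)! : K) = m.descFactorial i := by
  rw [← Nat.factorial_mul_descFactorial h, Nat.cast_mul,
    mul_div_cancel_left₀ _ (Nat.cast_ne_zero.mpr (factorial_ne_zero _))]

theorem stmt_6_general (n : ℕ) :
    let C : Matrix (Fin n) (Fin n) ℝ := fun i j =>
      2 ^ (i : ℕ) * (Nat.factorial (n + (j : ℕ) + 1) : ℝ) *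
        (Nat.factorial (n + (j : ℕ)) : ℝ) / (Nat.factorial (n + (j : ℕ) - (i : ℕ)) : ℝ)
    C.rank = n := by
  intro C
  set D : Matrix (Fin n) (Fin n) ℝ := Matrix.of fun i j => ((n + j).descFactorial i : ℝ)
  have hC : C = Matrix.of fun i j : Fin n => (2 : ℝ) ^ (i : ℕ) * (((n + j + 1)! : ℝ) * D i j) := by
    ext i j
    show _ * _ * _ / _ = _
    rw [mul_div_assoc, Nat.cast_factorial_div_factorial_sub (by omega)]
    simp only [D, Matrix.of_apply, mul_assoc]
  have hdet : C.det ≠ 0 := by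
    rw [hC, Matrix.det_of_mul_mul]
    refine mul_ne_zero (by positivity) (mul_ne_zero (by positivity) ?_)
    exact Matrix.det_descFactorial_ne_zero fun a b hab => by
      simpa [Fin.ext_iff] using hab
  simpa using C.rank_of_isUnit ((C.isUnit_iff_isUnit_det).mpr hdet.isUnit)

theorem stmt_6 (n : ℕ) (hn : 1 ≤ n) :
    let C : Matrix (Fin n) (Fin n) ℝ := fun i j =>
      2 ^ (i : ℕ) * (Nat.factorial (n + (j : ℕ) + 1) : ℝ) *
        (Nat.factorial (n + (j : ℕ)) : ℝ) / (Nat.factorial (n + (j : ℕ) - (i : ℕ)) : ℝ)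
    C.rank = n :=
  stmt_6_general n
end
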